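/- arXiv:quant-ph/0502173 — 2 statements merged into one kernel-verified Lean document; each statement's English description precedes it below -/
import Mathlib

section
/- (Schur's theorem) If K is a real orthogonal n×n matrix and D_λ is the diagonal matrix with diagonal entries λ = (λ₁,...,λₙ), then the vector of diagonal entries of Kᵀ D_λ K is majorized by λ. -/
open scoped BigOperators
open Matrix

/-- The decreasing rearrangement of a vector in `ℝ^k`. -/
noncomputable def descSort {k : ℕ} (x : Fin k → ℝ) : Fin k → ℝ :=
  fun i => (x ∘ Tuple.sort x) i.rev

/-- Sum of the `m` largest entries of `x`, i.e. partial sum of the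
decreasing rearrangement. -/
noncomputable def partSum {k : ℕ} (x : Fin k → ℝ) (m : ℕ) : ℝ :=
  ∑ i : Fin k, if (i : ℕ) < m then descSort x i else 0

/-- `Majorized x y` means `x ≺ y`. -/
noncomputable def Majorized {k : ℕ} (x y : Fin k → ℝ) : Prop :=
  (∀ m : ℕ, m < k → partSum x m ≤ partSum y m) ∧ (∑ i, x i = ∑ i, y i)

/-!
The diagonal of `Kᵀ D_λ K` is `S λ` for the matrix `S i j = K j i ^ 2`, which is doubly
stochastic because the rows and columns of `K` are unit vectors. For a doubly stochastic `S`, the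
sum of any `m` entries of `S λ` is `∑ j c j λ j` with weights `0 ≤ c j ≤ 1` of total mass `m`, and
such a combination is at most the sum of the `m` largest entries of `λ`: if `t` separates those
entries from the others, then `∑ j (c j - 𝟙_top j) (λ j - t) ≤ 0` termwise.
-/

open Finset

section Threshold

variable {ι : Type*} [Fintype ι]

lemma exists_threshold_of_forall_le {s : Finset ι} {x : ι → ℝ}
    (hs : ∀ i ∈ s, ∀ j ∉ s, x j ≤ x i) :
    ∃ t, (∀ i ∈ s, t ≤ x i) ∧ ∀ j ∉ s, x j ≤ t := by
  rcases s.eq_empty_or_nonempty with rfl | hne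
  · obtain ⟨t, ht⟩ := (Set.finite_range x).bddAbove
    exact ⟨t, by simp, fun j _ => ht ⟨j, rfl⟩⟩
  · exact ⟨s.inf' hne x, fun i hi => inf'_le x hi,
      fun j hj => (le_inf'_iff hne x).2 fun i hi => hs i hi j hj⟩

lemma sum_mul_le_sum_of_forall_le {s : Finset ι} {x c : ι → ℝ}
    (hs : ∀ i ∈ s, ∀ j ∉ s, x j ≤ x i) (hc0 : ∀ j, 0 ≤ c j) (hc1 : ∀ j, c j ≤ 1)
    (hc : ∑ j, c j = #s) :
    ∑ j, c j * x j ≤ ∑ j ∈ s, x j := by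
  classical
  obtain ⟨t, hin, hout⟩ := exists_threshold_of_forall_le hs
  set b : ι → ℝ := fun j => if j ∈ s then 1 else 0
  have hb : ∀ y : ι → ℝ, ∑ j, b j * y j = ∑ j ∈ s, y j := fun y => by
    simp only [b, ite_mul, one_mul, zero_mul, sum_ite_mem, univ_inter]
  have termwise : ∑ j, (c j - b j) * (x j - t) ≤ 0 := by
    refine sum_nonpos fun j _ => ?_
    by_cases hj : j ∈ s
    · simp only [b, hj, if_true]
      exact mul_nonpos_of_nonpos_of_nonneg (by linarith [hc1 j]) (by linarith [hin j hj])
    · simp only [b, hj, if_false, sub_zero]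
      exact mul_nonpos_of_nonneg_of_nonpos (hc0 j) (by linarith [hout j hj])
  have expand : ∑ j, (c j - b j) * (x j - t)
      = ∑ j, c j * x j - ∑ j, b j * x j - t * (∑ j, c j - ∑ j, b j * 1) := by
    simp only [mul_sub, Finset.mul_sum, ← Finset.sum_sub_distrib]
    exact Finset.sum_congr rfl fun j _ => by ring
  rw [hb, hb, hc, sum_const, nsmul_one, sub_self, mul_zero, sub_zero] at expand
  linarith

end Threshold

section Sorting

variable {k : ℕ}

/-- `descSort x = x ∘ descPerm x` -/
noncomputable def descPerm (x : Fin k → ℝ) : Equiv.Perm (Fin k) :=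
  Fin.revPerm.trans (Tuple.sort x)

lemma antitone_comp_descPerm (x : Fin k → ℝ) : Antitone (x ∘ descPerm x) :=
  fun _ _ hab => Tuple.monotone_sort x (Fin.rev_le_rev.2 hab)

noncomputable def topSet (x : Fin k → ℝ) (m : ℕ) : Finset (Fin k) :=
  ({i : Fin k | (i : ℕ) < m} : Finset (Fin k)).map (descPerm x).toEmbedding

lemma card_topSet (x : Fin k → ℝ) {m : ℕ} (hm : m ≤ k) : #(topSet x m) = m := by
  rw [topSet, card_map, Fin.card_filter_val_lt, min_eq_right hm]

lemma partSum_eq_sum_topSet (x : Fin k → ℝ) (m : ℕ) :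
    partSum x m = ∑ j ∈ topSet x m, x j := by
  rw [partSum, ← sum_filter, topSet, sum_map]
  rfl

lemma le_of_mem_topSet_of_notMem {x : Fin k → ℝ} {m : ℕ} {i j : Fin k}
    (hi : i ∈ topSet x m) (hj : j ∉ topSet x m) : x j ≤ x i := by
  simp only [topSet, mem_map_equiv, mem_filter, mem_univ, true_and, not_lt] at hi hj
  have := antitone_comp_descPerm x (show (descPerm x).symm i ≤ (descPerm x).symm j by
    rw [Fin.le_def]; omega)
  simpa using this

lemma sum_mul_le_partSum (x c : Fin k → ℝ) {m : ℕ} (hm : m ≤ k) (hc0 : ∀ j, 0 ≤ c j)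
    (hc1 : ∀ j, c j ≤ 1) (hc : ∑ j, c j = m) :
    ∑ j, c j * x j ≤ partSum x m := by
  rw [partSum_eq_sum_topSet]
  exact sum_mul_le_sum_of_forall_le (fun i hi j hj => le_of_mem_topSet_of_notMem hi hj)
    hc0 hc1 (by rw [hc, card_topSet x hm])

end Sorting

theorem majorized_mulVec_of_mem_doublyStochastic {k : ℕ} {M : Matrix (Fin k) (Fin k) ℝ}
    (hM : M ∈ doublyStochastic ℝ (Fin k)) (x : Fin k → ℝ) : Majorized (M *ᵥ x) x := by
  refine ⟨fun m hm => ?_, sum_mulVec_of_mem_doublyStochastic hM⟩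
  set A := topSet (M *ᵥ x) m
  have hsum : partSum (M *ᵥ x) m = ∑ j, (∑ i ∈ A, M i j) * x j := by
    simp only [partSum_eq_sum_topSet, mulVec, dotProduct, sum_mul]
    exact sum_comm
  rw [hsum]
  refine sum_mul_le_partSum x _ hm.le
    (fun j => sum_nonneg fun i _ => nonneg_of_mem_doublyStochastic hM) (fun j => ?_) ?_
  · rw [← sum_col_of_mem_doublyStochastic hM j]
    exact sum_le_sum_of_subset_of_nonneg (subset_univ A)
      fun i _ _ => nonneg_of_mem_doublyStochastic hM
  · rw [sum_comm]
    simp [sum_row_of_mem_doublyStochastic hM, A, card_topSet _ hm.le]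

lemma hadamard_self_mem_doublyStochastic {R n : Type*} [CommRing R] [LinearOrder R]
    [IsStrictOrderedRing R] [Fintype n] [DecidableEq n] {U : Matrix n n R} (hU : U * Uᵀ = 1) :
    U ⊙ U ∈ doublyStochastic R n := by
  have hU' : Uᵀ * U = 1 := mul_eq_one_comm.mp hU
  refine mem_doublyStochastic_iff_sum.2 ⟨fun i j => mul_self_nonneg _, fun i => ?_, fun j => ?_⟩
  · simpa [mul_apply] using congrFun (congrFun hU i) i
  · simpa [mul_apply] using congrFun (congrFun hU' j) j

lemma transpose_mul_diagonal_mul_apply_self {R n : Type*} [CommSemiring R] [Fintype n]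
    [DecidableEq n] (K : Matrix n n R) (lam : n → R) (i : n) :
    (Kᵀ * diagonal lam * K) i i = ((Kᵀ ⊙ Kᵀ) *ᵥ lam) i := by
  simp only [mul_apply, mulVec, dotProduct, hadamard_apply, transpose_apply, diagonal_apply,
    mul_ite, mul_zero, sum_ite_eq', mem_univ, if_true]
  exact sum_congr rfl fun j _ => by ring

/-- **Schur's theorem.** The diagonal of `Kᵀ D_λ K`, for `K` orthogonal,
is majorized by `λ`. -/
theorem schur_diagonal_majorized {n : ℕ} (K : Matrix (Fin n) (Fin n) ℝ)
    (hK : Kᵀ * K = 1) (lam : Fin n → ℝ) :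
    Majorized (fun i => (Kᵀ * Matrix.diagonal lam * K) i i) lam := by
  have hS : Kᵀ ⊙ Kᵀ ∈ doublyStochastic ℝ (Fin n) :=
    hadamard_self_mem_doublyStochastic (by rwa [transpose_transpose])
  simpa only [transpose_mul_diagonal_mul_apply_self] using
    majorized_mulVec_of_mem_doublyStochastic hS lam
end

section
/- (Horn's theorem) If a, λ ∈ R^n and a ≺ λ, then there exists a real orthogonal matrix K ∈ SO(n) such that the diagonal entries of Kᵀ D_λ K equal (a₁,...,aₙ), where D_λ is the diagonal matrix with entries λ. -/
/-!
Induction on `n`. After sorting `a` and `λ` decreasingly, `a₀ ≤ λ₀` and `λₙ₋₁ ≤ a₀`, so `a₀` lies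
between two adjacent entries `λⱼ ≥ a₀ ≥ λⱼ₊₁`. A rotation in the `(j, j+1)`-plane conjugates `D_λ`
into a matrix whose `(j+1, j+1)` entry is `a₀` and which is diagonal off that row and column, with
`λⱼ, λⱼ₊₁` merged into the single entry `λⱼ + λⱼ₊₁ - a₀`. The merged vector is still decreasing
and majorizes `(a₁, …, aₙ₋₁)`, so induction applies to the complementary block, and conjugating by
a block-diagonal orthogonal matrix does not touch the `(j+1, j+1)` entry. Finally, flipping the
sign of one column of `K` makes `det K = 1` without changing the diagonal of `Kᵀ D_λ K`.
-/

open scoped BigOperators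
open Matrix

section OrthoConj

variable {ι κ : Type*} [Fintype ι] [DecidableEq ι] [Fintype κ] [DecidableEq κ]

def HasOrthoConjDiag (M : Matrix ι ι ℝ) (a : ι → ℝ) : Prop :=
  ∃ K ∈ orthogonalGroup ι ℝ, ∀ i, (Kᵀ * M * K) i i = a i

lemma hasOrthoConjDiag_diag (M : Matrix ι ι ℝ) : HasOrthoConjDiag M M.diag :=
  ⟨1, one_mem _, by simp⟩

lemma HasOrthoConjDiag.of_conj {M R : Matrix ι ι ℝ} {a : ι → ℝ}
    (hR : R ∈ orthogonalGroup ι ℝ) (h : HasOrthoConjDiag (Rᵀ * M * R) a) :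
    HasOrthoConjDiag M a := by
  obtain ⟨K, hK, hKa⟩ := h
  refine ⟨R * K, mul_mem hR hK, fun i => ?_⟩
  simpa only [transpose_mul, Matrix.mul_assoc] using hKa i

lemma HasOrthoConjDiag.submatrix {M : Matrix ι ι ℝ} {a : ι → ℝ} (h : HasOrthoConjDiag M a)
    (e₁ e₂ : κ ≃ ι) : HasOrthoConjDiag (M.submatrix e₁ e₁) (a ∘ e₂) := by
  obtain ⟨K, hK, hKa⟩ := h
  refine ⟨K.submatrix e₁ e₂, ?_, fun i => ?_⟩
  · rw [mem_orthogonalGroup_iff'] at hK ⊢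
    rw [transpose_submatrix, submatrix_mul_equiv, hK, submatrix_one_equiv]
  · rw [transpose_submatrix, submatrix_mul_equiv, submatrix_mul_equiv]
    exact hKa (e₂ i)

lemma HasOrthoConjDiag.comp_perm {M : Matrix ι ι ℝ} {a : ι → ℝ} (h : HasOrthoConjDiag M a)
    (σ : Equiv.Perm ι) : HasOrthoConjDiag M (a ∘ σ) := by
  simpa using h.submatrix (Equiv.refl ι) σ

lemma HasOrthoConjDiag.fromBlocks {A : Matrix ι ι ℝ} {D : Matrix κ κ ℝ} {a : ι → ℝ} {d : κ → ℝ}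
    (hA : HasOrthoConjDiag A a) (hD : HasOrthoConjDiag D d) (B : Matrix ι κ ℝ)
    (C : Matrix κ ι ℝ) : HasOrthoConjDiag (Matrix.fromBlocks A B C D) (Sum.elim a d) := by
  obtain ⟨K₁, hK₁, hK₁a⟩ := hA
  obtain ⟨K₂, hK₂, hK₂d⟩ := hD
  rw [mem_orthogonalGroup_iff'] at hK₁ hK₂
  refine ⟨Matrix.fromBlocks K₁ 0 0 K₂, ?_, ?_⟩
  · rw [mem_orthogonalGroup_iff', fromBlocks_transpose, fromBlocks_multiply]
    simp [hK₁, hK₂]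
  · rintro (i | i) <;> simp [fromBlocks_transpose, fromBlocks_multiply, hK₁a, hK₂d]

lemma HasOrthoConjDiag.insertNth {k : ℕ} {M : Matrix (Fin (k + 1)) (Fin (k + 1)) ℝ}
    {a : Fin k → ℝ} (p : Fin (k + 1))
    (h : HasOrthoConjDiag (M.submatrix p.succAbove p.succAbove) a) :
    HasOrthoConjDiag M (p.insertNth (M p p) a) := by
  let e : Fin (k + 1) ≃ Fin k ⊕ Unit := (finSuccEquiv' p).trans (Equiv.optionEquivSumPUnit _)
  set N := M.submatrix e.symm e.symm
  have h₁₁ : N.toBlocks₁₁ = M.submatrix p.succAbove p.succAbove := by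
    ext; simp [N, e, toBlocks₁₁, finSuccEquiv'_symm_some]
  have hN := (h₁₁ ▸ h).fromBlocks (hasOrthoConjDiag_diag N.toBlocks₂₂) N.toBlocks₁₂ N.toBlocks₂₁
  rw [fromBlocks_toBlocks] at hN
  convert hN.submatrix e e using 1
  · simp [N]
  · ext i
    induction i using p.succAboveCases <;> simp [e, N, toBlocks₂₂, finSuccEquiv'_symm_none]

lemma HasOrthoConjDiag.exists_det_eq_one {M : Matrix ι ι ℝ} {a : ι → ℝ}
    (h : HasOrthoConjDiag M a) :
    ∃ K ∈ orthogonalGroup ι ℝ, K.det = 1 ∧ ∀ i, (Kᵀ * M * K) i i = a i := by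
  obtain ⟨K, hK, hKa⟩ := h
  have hdet : K.det * K.det = 1 := by
    simpa [det_transpose] using congrArg det ((mem_orthogonalGroup_iff' _ _).mp hK)
  rcases mul_self_eq_one_iff.mp hdet with hK1 | hK1
  · exact ⟨K, hK, hK1, hKa⟩
  obtain ⟨i₀⟩ : Nonempty ι := by
    by_contra hι
    rw [not_nonempty_iff] at hι
    norm_num [det_isEmpty] at hK1
  set S : Matrix ι ι ℝ := diagonal (Function.update 1 i₀ (-1))
  have hS : S ∈ orthogonalGroup ι ℝ := by
    rw [mem_orthogonalGroup_iff', diagonal_transpose, diagonal_mul_diagonal, ← diagonal_one]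
    congr 1
    ext i
    by_cases hi : i = i₀ <;> simp [hi]
  refine ⟨K * S, mul_mem hK hS, ?_, fun i => ?_⟩
  · rw [det_mul, hK1, det_diagonal, Finset.prod_update_of_mem (Finset.mem_univ _)]
    simp
  · have hconj : (K * S)ᵀ * M * (K * S) = S * (Kᵀ * M * K) * S := by
      simp [S, transpose_mul, Matrix.mul_assoc]
    rw [hconj, mul_diagonal, diagonal_mul, hKa]
    by_cases hi : i = i₀ <;> simp [hi]

end OrthoConj

section Givens

variable {ι : Type*} [Fintype ι] [DecidableEq ι]

def givens (u v : ι) (c s : ℝ) : Matrix ι ι ℝ :=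
  of fun k i =>
    if i = u then (Pi.single u c + Pi.single v s : ι → ℝ) k
    else if i = v then (Pi.single u (-s) + Pi.single v c : ι → ℝ) k
    else (Pi.single i 1 : ι → ℝ) k

variable {u v : ι} {c s : ℝ}

lemma givens_mem_orthogonalGroup (huv : u ≠ v) (hcs : c ^ 2 + s ^ 2 = 1) :
    givens u v c s ∈ orthogonalGroup ι ℝ := by
  rw [mem_orthogonalGroup_iff']
  ext i j
  by_cases hiu : i = u <;> by_cases hiv : i = v <;> by_cases hju : j = u <;>
    by_cases hjv : j = v <;>
    simp_all [givens, mul_apply, Pi.single_apply, mul_add, Finset.sum_add_distrib, ite_mul,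
      one_apply] <;>
    (try simp_all [eq_comm]) <;>
    first | linear_combination hcs | ring

lemma givens_conj_diagonal_apply_self (huv : u ≠ v) (L : ι → ℝ) :
    ((givens u v c s)ᵀ * diagonal L * givens u v c s) u u = c ^ 2 * L u + s ^ 2 * L v := by
  simp [givens, mul_apply, Pi.single_apply, add_mul, mul_add, Finset.sum_add_distrib, huv,
    huv.symm, ite_mul, mul_ite]
  ring

lemma givens_conj_diagonal_apply_of_ne (huv : u ≠ v) (L : ι → ℝ) {i j : ι} (hi : i ≠ u)
    (hj : j ≠ u) : ((givens u v c s)ᵀ * diagonal L * givens u v c s) i j =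
      diagonal (Function.update L v (s ^ 2 * L u + c ^ 2 * L v)) i j := by
  by_cases hiv : i = v <;> by_cases hjv : j = v <;>
    simp_all [givens, mul_apply, Pi.single_apply, mul_add, Finset.sum_add_distrib, ite_mul,
      diagonal_apply] <;>
    simp_all [eq_comm, sq, mul_comm, mul_left_comm]

lemma exists_rotation_conj_diagonal (L : ι → ℝ) (huv : u ≠ v) {t : ℝ}
    (ht : t ∈ Set.uIcc (L u) (L v)) :
    ∃ R ∈ orthogonalGroup ι ℝ, (Rᵀ * diagonal L * R) u u = t ∧ ∀ i j, i ≠ u → j ≠ u →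
      (Rᵀ * diagonal L * R) i j = diagonal (Function.update L v (L u + L v - t)) i j := by
  rw [← segment_eq_uIcc, segment_eq_image] at ht
  obtain ⟨θ, ⟨hθ₀, hθ₁⟩, rfl⟩ := ht
  beta_reduce
  have hc : √(1 - θ) ^ 2 = 1 - θ := Real.sq_sqrt (by linarith)
  have hs : √θ ^ 2 = θ := Real.sq_sqrt hθ₀
  refine ⟨givens u v √(1 - θ) √θ, givens_mem_orthogonalGroup huv (by linarith), ?_,
    fun i j hi hj => ?_⟩
  · rw [givens_conj_diagonal_apply_self huv, hc, hs, smul_eq_mul, smul_eq_mul]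
  · rw [givens_conj_diagonal_apply_of_ne huv L hi hj, hc, hs, smul_eq_mul, smul_eq_mul]
    ring_nf

end Givens

lemma Fin.exists_succ_le_le_castSucc {α : Type*} [LinearOrder α] :
    ∀ {n : ℕ} (f : Fin (n + 2) → α) {t : α}, t ≤ f 0 → f (Fin.last (n + 1)) ≤ t →
      ∃ j : Fin (n + 1), f j.succ ≤ t ∧ t ≤ f j.castSucc
  | 0, _, _, h₀, hl => ⟨0, hl, h₀⟩
  | n + 1, f, t, h₀, hl => by
    by_cases h₁ : f 1 ≤ t
    · exact ⟨0, h₁, h₀⟩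
    · obtain ⟨j, hj⟩ := Fin.exists_succ_le_le_castSucc (f ∘ Fin.succ) (le_of_not_ge h₁) hl
      exact ⟨j.succ, hj⟩

section Sorting

variable {k : ℕ}

lemma descSort_antitone (x : Fin k → ℝ) : Antitone (descSort x) :=
  fun _ _ hij => Tuple.monotone_sort x (Fin.rev_le_rev.mpr hij)

lemma descSort_eq_self {x : Fin k → ℝ} (hx : Antitone x) : descSort x = x := by
  have h : x ∘ Fin.revPerm = x ∘ Tuple.sort x :=
    (Tuple.comp_sort_eq_comp_iff_monotone).mpr fun _ _ hij => hx (Fin.rev_le_rev.mpr hij)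
  funext i
  simpa [descSort] using (congrFun h i.rev).symm

lemma exists_perm_descSort (x : Fin k → ℝ) : ∃ σ : Equiv.Perm (Fin k), descSort x ∘ σ = x :=
  ⟨(Tuple.sort x).symm.trans Fin.revPerm, by funext i; simp [descSort]⟩

lemma sum_descSort (x : Fin k → ℝ) : ∑ i, descSort x i = ∑ i, x i := by
  obtain ⟨σ, hσ⟩ := exists_perm_descSort x
  conv_rhs => rw [← hσ]
  exact (Equiv.sum_comp σ _).symm

def prefixSum (x : Fin k → ℝ) (m : ℕ) : ℝ :=
  ∑ i : Fin k, if (i : ℕ) < m then x i else 0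

lemma partSum_eq_prefixSum_of_antitone {x : Fin k → ℝ} (hx : Antitone x) (m : ℕ) :
    partSum x m = prefixSum x m := by
  rw [partSum, descSort_eq_self hx, prefixSum]

lemma prefixSum_of_le (x : Fin k → ℝ) {m : ℕ} (hm : k ≤ m) : prefixSum x m = ∑ i, x i :=
  Finset.sum_congr rfl fun i _ => if_pos (i.isLt.trans_le hm)

lemma prefixSum_one (x : Fin (k + 1) → ℝ) : prefixSum x 1 = x 0 := by
  simp [prefixSum]

lemma prefixSum_comp_succAbove (x : Fin (k + 1) → ℝ) {p : Fin (k + 1)} {m : ℕ} (hp : (p : ℕ) ≤ m) :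
    prefixSum (x ∘ p.succAbove) m = prefixSum x (m + 1) - x p := by
  rw [prefixSum, prefixSum, Fin.sum_univ_succAbove _ p, if_pos (by omega), add_sub_cancel_left]
  refine Finset.sum_congr rfl fun i _ => if_congr ?_ rfl rfl
  obtain h | h := lt_or_ge i.castSucc p
  · rw [Fin.succAbove_of_castSucc_lt _ _ h]
    simp only [Fin.lt_def, Fin.val_castSucc] at h ⊢
    omega
  · rw [Fin.succAbove_of_le_castSucc _ _ h]
    simp only [Fin.le_def, Fin.val_castSucc, Fin.val_succ] at h ⊢
    omega

lemma prefixSum_update (x : Fin k → ℝ) {v : Fin k} (y : ℝ) {m : ℕ} (hv : (v : ℕ) < m) :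
    prefixSum (Function.update x v y) m = prefixSum x m - x v + y := by
  have hsplit (i : Fin k) : (if (i : ℕ) < m then Function.update x v y i else 0) =
      (if (i : ℕ) < m then x i else 0) + if i = v then y - x v else 0 := by
    by_cases hi : i = v
    · subst hi
      simp [hv]
    · simp [hi]
  simp only [prefixSum, hsplit, Finset.sum_add_distrib, Finset.sum_ite_eq', Finset.mem_univ,
    if_true]
  ring

lemma majorized_iff_of_antitone {x y : Fin k → ℝ} (hx : Antitone x) (hy : Antitone y) :
    Majorized x y ↔
      (∀ m < k, prefixSum x m ≤ prefixSum y m) ∧ prefixSum x k = prefixSum y k := by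
  simp only [Majorized, partSum_eq_prefixSum_of_antitone hx, partSum_eq_prefixSum_of_antitone hy,
    prefixSum_of_le _ le_rfl]

lemma majorized_descSort_iff {x y : Fin k → ℝ} :
    Majorized (descSort x) (descSort y) ↔ Majorized x y := by
  have hpart (z : Fin k → ℝ) (m : ℕ) : partSum (descSort z) m = partSum z m := by
    rw [partSum, descSort_eq_self (descSort_antitone z), partSum]
  simp only [Majorized, hpart, sum_descSort]

end Sorting

section Merge

variable {n : ℕ}

-- `L` with its adjacent entries `L j`, `L (j + 1)` merged into the single entry
-- `L j + L (j + 1) - t`, placed at position `j`.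
def mergeAdjacent (L : Fin (n + 2) → ℝ) (j : Fin (n + 1)) (t : ℝ) : Fin (n + 1) → ℝ :=
  Function.update L j.castSucc (L j.succ + L j.castSucc - t) ∘ j.succ.succAbove

variable {L : Fin (n + 2) → ℝ} {j : Fin (n + 1)} {t : ℝ}

lemma antitone_mergeAdjacent (hL : Antitone L) (h₁ : L j.succ ≤ t) (h₂ : t ≤ L j.castSucc) :
    Antitone (mergeAdjacent L j t) := by
  have hupdate : Antitone (Function.update L j.castSucc (L j.succ + L j.castSucc - t)) := by
    intro x z hxz
    simp only [Function.update_apply]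
    split_ifs with hz hx hx
    · exact le_rfl
    · have : L j.castSucc ≤ L x := hL (hz ▸ hxz)
      linarith
    · have : L z ≤ L j.succ :=
        hL (Fin.castSucc_lt_iff_succ_le.mp (lt_of_le_of_ne (hx ▸ hxz) (Ne.symm hz)))
      linarith
    · exact hL hxz
  exact hupdate.comp_monotone (Fin.strictMono_succAbove _).monotone

lemma mergeAdjacent_of_lt {i : Fin (n + 1)} (hij : i < j) :
    mergeAdjacent L j t i = L i.castSucc := by
  rw [mergeAdjacent, Function.comp_apply,
    Fin.succAbove_of_castSucc_lt _ _ (Fin.castSucc_lt_succ_iff.mpr hij.le),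
    Function.update_of_ne (Fin.castSucc_injective _ |>.ne hij.ne)]

lemma prefixSum_mergeAdjacent {m : ℕ} (hjm : (j : ℕ) < m) :
    prefixSum (mergeAdjacent L j t) m = prefixSum L (m + 1) - t := by
  rw [mergeAdjacent, prefixSum_comp_succAbove _ (by simpa using hjm),
    prefixSum_update _ _ (by simp; omega),
    Function.update_of_ne (Fin.castSucc_lt_succ (i := j)).ne']
  ring

lemma majorized_mergeAdjacent {a : Fin (n + 2) → ℝ} (ha : Antitone a) (hL : Antitone L)
    (h : Majorized a L) (h₁ : L j.succ ≤ a 0) (h₂ : a 0 ≤ L j.castSucc) :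
    Majorized (a ∘ Fin.succ) (mergeAdjacent L j (a 0)) := by
  rw [majorized_iff_of_antitone ha hL] at h
  rw [majorized_iff_of_antitone (ha.comp_monotone (Fin.strictMono_succ).monotone)
    (antitone_mergeAdjacent hL h₁ h₂)]
  have htail (m : ℕ) : prefixSum (a ∘ Fin.succ) m = prefixSum a (m + 1) - a 0 := by
    simpa using prefixSum_comp_succAbove a (p := 0) (Nat.zero_le m)
  refine ⟨fun m hm => ?_, ?_⟩
  · obtain hmj | hjm := le_or_gt m j
    · refine Finset.sum_le_sum fun i _ => ?_
      split_ifs with him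
      · rw [mergeAdjacent_of_lt (Fin.lt_def.mpr (by omega))]
        calc a i.succ ≤ a 0 := ha (Fin.zero_le _)
          _ ≤ L j.castSucc := h₂
          _ ≤ L i.castSucc := hL (Fin.castSucc_le_castSucc_iff.mpr (Fin.le_def.mpr (by omega)))
      · exact le_rfl
    · rw [htail, prefixSum_mergeAdjacent hjm]
      linarith [h.1 (m + 1) (by omega)]
  · rw [htail, prefixSum_mergeAdjacent j.isLt]
    linarith [h.2]

end Merge

lemma HasOrthoConjDiag.of_descSort {k : ℕ} {a lam : Fin k → ℝ}
    (h : HasOrthoConjDiag (diagonal (descSort lam)) (descSort a)) :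
    HasOrthoConjDiag (diagonal lam) a := by
  obtain ⟨σ, hσ⟩ := exists_perm_descSort a
  obtain ⟨τ, hτ⟩ := exists_perm_descSort lam
  simpa [hσ, hτ, submatrix_diagonal_equiv] using h.submatrix τ σ

lemma hasOrthoConjDiag_of_majorized_of_antitone {n : ℕ}
    (ih : ∀ a' lam' : Fin (n + 1) → ℝ, Majorized a' lam' → HasOrthoConjDiag (diagonal lam') a')
    {a L : Fin (n + 2) → ℝ} (ha : Antitone a) (hL : Antitone L) (h : Majorized a L) :
    HasOrthoConjDiag (diagonal L) a := by
  have h₀ : a 0 ≤ L 0 := by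
    simpa [partSum_eq_prefixSum_of_antitone, ha, hL, prefixSum_one] using h.1 1 (by omega)
  have hlast : L (Fin.last _) ≤ a 0 := by
    obtain ⟨i, -, hi⟩ := Finset.exists_le_of_sum_le Finset.univ_nonempty h.2.ge
    exact (hL (Fin.le_last i)).trans (hi.trans (ha (Fin.zero_le i)))
  obtain ⟨j, h₁, h₂⟩ := Fin.exists_succ_le_le_castSucc L h₀ hlast
  obtain ⟨R, hR, hRu, hRrest⟩ :=
    exists_rotation_conj_diagonal L Fin.castSucc_lt_succ.ne' (Set.mem_uIcc_of_le h₁ h₂)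
  have hsub : (Rᵀ * diagonal L * R).submatrix j.succ.succAbove j.succ.succAbove =
      diagonal (mergeAdjacent L j (a 0)) := by
    rw [mergeAdjacent, ← submatrix_diagonal _ _ Fin.succAbove_right_injective]
    ext x y
    exact hRrest _ _ (Fin.succAbove_ne _ _) (Fin.succAbove_ne _ _)
  have hM := (hsub ▸ ih _ _ (majorized_mergeAdjacent ha hL h h₁ h₂)).insertNth j.succ
  rw [hRu, ← Fin.cons_comp_cycleRange, show Fin.cons (a 0) (a ∘ Fin.succ) = a from
    Fin.cons_self_tail a] at hM
  simpa [Function.comp_assoc] using (hM.comp_perm j.succ.cycleRange.symm).of_conj hR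

theorem hasOrthoConjDiag_of_majorized :
    ∀ {n : ℕ} {a lam : Fin n → ℝ}, Majorized a lam → HasOrthoConjDiag (diagonal lam) a
  | 0, _, _, _ => ⟨1, one_mem _, fun i => i.elim0⟩
  | 1, a, lam, h => by
    obtain rfl : a = lam := funext fun i => by simpa [Fin.fin_one_eq_zero i] using h.2
    simpa using hasOrthoConjDiag_diag (diagonal a)
  | _ + 2, a, lam, h =>
    .of_descSort <| hasOrthoConjDiag_of_majorized_of_antitone
      (fun _ _ => hasOrthoConjDiag_of_majorized) (descSort_antitone a) (descSort_antitone lam)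
      (majorized_descSort_iff.mpr h)

/-- **Horn's theorem.** If `a ≺ λ` then there is `K ∈ SO(n)` such that the
diagonal of `Kᵀ D_λ K` is `a`. -/
theorem horn_exists_so {n : ℕ} (a lam : Fin n → ℝ) (h : Majorized a lam) :
    ∃ K : Matrix (Fin n) (Fin n) ℝ, Kᵀ * K = 1 ∧ K.det = 1 ∧
      ∀ i, (Kᵀ * Matrix.diagonal lam * K) i i = a i := by
  obtain ⟨K, hK, hdet, hKa⟩ := (hasOrthoConjDiag_of_majorized h).exists_det_eq_one
  exact ⟨K, (mem_orthogonalGroup_iff' _ _).mp hK, hdet, hKa⟩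
end
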